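/- Let B be a skew-symmetrizable n×n integer matrix, let t be a vertex reached from the initial vertex t_0 by a path, let t' be obtained from t by one further mutation in direction ℓ, and let ε ∈ {±1}. Then F^{B;t_0}_{t'} = F^{B;t_0}_t (J_ℓ + [−εB_t]^{•ℓ}_+) + [−εC^{B;t_0}_t]^{•ℓ}_+ + [εC^{−B;t_0}_t]^{•ℓ}_+, where C^{−B;t_0}_t denotes the C-matrix for the initial matrix −B along the same path. -/

import Mathlib

open Matrix

section Defs

variable {ι : Type} [Fintype ι] [DecidableEq ι]
variable {R : Type} [CommRing R] [LinearOrder R] [IsStrictOrderedRing R]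

/-- Entrywise positive part `[A]₊`. -/
def matPos (A : Matrix ι ι R) : Matrix ι ι R := fun i j => max (A i j) 0

/-- `A^{k•}`: the matrix keeping only the `k`-th row of `A`. -/
def rowSel (k : ι) (A : Matrix ι ι R) : Matrix ι ι R := fun i j => if i = k then A i j else 0

/-- `A^{•k}`: the matrix keeping only the `k`-th column of `A`. -/
def colSel (k : ι) (A : Matrix ι ι R) : Matrix ι ι R := fun i j => if j = k then A i j else 0

/-- Entrywise maximum of two matrices. -/
def emax (A B : Matrix ι ι R) : Matrix ι ι R := fun i j => max (A i j) (B i j)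

/-- `J_ℓ`: identity matrix with `(ℓ,ℓ)` entry replaced by `-1`. -/
def Jmat (ℓ : ι) : Matrix ι ι R := Matrix.diagonal fun i => if i = ℓ then -1 else 1

/-- Matrix mutation `μ_k(B)` in direction `k`. -/
def mutate (B : Matrix ι ι R) (k : ι) : Matrix ι ι R := fun i j =>
  if i = k ∨ j = k then -(B i j)
  else B i j + max (B i k) 0 * B k j + B i k * max (-(B k j)) 0

/-- The data `(B_t, C_t, G_t, F_t)` attached to a vertex. -/
structure SeedData (ι R : Type) where
  B : Matrix ι ι R
  C : Matrix ι ι R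
  G : Matrix ι ι R
  F : Matrix ι ι R

/-- One final-seed mutation step in direction `ℓ` (with initial exchange matrix `B0`). -/
def seedStep (B0 : Matrix ι ι R) (s : SeedData ι R) (ℓ : ι) : SeedData ι R where
  B := mutate s.B ℓ
  C := s.C * (Jmat ℓ + rowSel ℓ (matPos s.B)) + colSel ℓ (matPos (-s.C)) * s.B
  G := s.G * (Jmat ℓ + colSel ℓ (matPos s.B)) - B0 * colSel ℓ (matPos s.C)
  F := s.F * Jmat ℓ + emax (colSel ℓ (matPos s.C) + s.F * colSel ℓ (matPos s.B))
      (colSel ℓ (matPos (-s.C)) + s.F * colSel ℓ (matPos (-s.B)))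

/-- The seed data at the endpoint of the path `p` starting from the initial vertex. -/
def seedOf (B0 : Matrix ι ι R) (p : List ι) : SeedData ι R :=
  p.foldl (seedStep B0) ⟨B0, 1, 1, 0⟩

/-- The exchange matrix `B_t` at the end of the path `p`. -/
def Bpath (B : Matrix ι ι R) (p : List ι) : Matrix ι ι R := (seedOf B p).B

/-- The `C`-matrix `C^{B;t_0}_t` at the end of the path `p`. -/
def Cmat (B : Matrix ι ι R) (p : List ι) : Matrix ι ι R := (seedOf B p).C

/-- The `G`-matrix `G^{B;t_0}_t` at the end of the path `p`. -/
def Gmat (B : Matrix ι ι R) (p : List ι) : Matrix ι ι R := (seedOf B p).G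

/-- The `F`-matrix `F^{B;t_0}_t` at the end of the path `p`. -/
def Fmat (B : Matrix ι ι R) (p : List ι) : Matrix ι ι R := (seedOf B p).F

/-- `B` is skew-symmetrizable: `DB` is skew-symmetric for some positive diagonal `D`. -/
def IsSkewSymmetrizable (B : Matrix ι ι ℤ) : Prop :=
  ∃ d : ι → ℤ, (∀ i, 0 < d i) ∧ (Matrix.diagonal d * B)ᵀ = -(Matrix.diagonal d * B)

/-- Column sign-coherence: every column is nonzero and has all entries of one sign. -/
def ColSignCoherent (A : Matrix ι ι ℤ) : Prop :=
  ∀ j, (∃ i, A i j ≠ 0) ∧ ((∀ i, 0 ≤ A i j) ∨ (∀ i, A i j ≤ 0))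

/-- Row sign-coherence: every row is nonzero and has all entries of one sign. -/
def RowSignCoherent (A : Matrix ι ι ℤ) : Prop :=
  ∀ i, (∃ j, A i j ≠ 0) ∧ ((∀ j, 0 ≤ A i j) ∨ (∀ j, A i j ≤ 0))

/-- `ε` is the column sign `ε_{•ℓ}(A)` of the (sign-coherent, nonzero) `ℓ`-th column of `A`. -/
def IsColSign (ε : ℤ) (A : Matrix ι ι ℤ) (ℓ : ι) : Prop :=
  (ε = 1 ∨ ε = -1) ∧ (∃ i, A i ℓ ≠ 0) ∧ ∀ i, 0 ≤ ε * A i ℓ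

/-- `ε` is the row sign `ε_{k•}(A)` of the (sign-coherent, nonzero) `k`-th row of `A`. -/
def IsRowSign (ε : ℤ) (A : Matrix ι ι ℤ) (k : ι) : Prop :=
  (ε = 1 ∨ ε = -1) ∧ (∃ j, A k j ≠ 0) ∧ ∀ j, 0 ≤ ε * A k j

/-- Sign-coherence of `C`-matrices: for every skew-symmetrizable initial integer matrix and
every path, the associated `C`-matrix is column sign-coherent. -/
def SignCoherenceOfC : Prop :=
  ∀ (κ : Type) [Fintype κ] [DecidableEq κ], ∀ B : Matrix κ κ ℤ,
    IsSkewSymmetrizable B → ∀ p : List κ, ColSignCoherent (Cmat B p)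

/-- The principal extension `B̄ = [[B, -I],[I, O]]` of `B`, on the index type `Fin n ⊕ Fin n`. -/
def pext {n : ℕ} (B : Matrix (Fin n) (Fin n) ℤ) :
    Matrix (Fin n ⊕ Fin n) (Fin n ⊕ Fin n) ℤ :=
  Matrix.fromBlocks B (-1) 1 0

noncomputable section FPolys

/-- The ambient field of rational functions `ℚ(y_i : i ∈ ι)` (fraction field of `ℤ[y_i]`). -/
abbrev FField (ι : Type) := FractionRing (MvPolynomial ι ℤ)

/-- The variable `y_i` inside the fraction field. -/
def yvar (i : ι) : FField ι := algebraMap (MvPolynomial ι ℤ) (FField ι) (MvPolynomial.X i)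

/-- One mutation step for the triple `(B_t, C_t, (F_{j;t})_j)`. -/
def fpolyStep (s : Matrix ι ι ℤ × Matrix ι ι ℤ × (ι → FField ι)) (ℓ : ι) :
    Matrix ι ι ℤ × Matrix ι ι ℤ × (ι → FField ι) :=
  ⟨mutate s.1 ℓ,
   s.2.1 * (Jmat ℓ + rowSel ℓ (matPos s.1)) + colSel ℓ (matPos (-s.2.1)) * s.1,
   fun j => if j = ℓ then
     (s.2.2 ℓ)⁻¹ *
       ((∏ i, yvar i ^ (max (s.2.1 i ℓ) 0).toNat) * (∏ i, s.2.2 i ^ (max (s.1 i ℓ) 0).toNat)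
        + (∏ i, yvar i ^ (max (-(s.2.1 i ℓ)) 0).toNat) *
            (∏ i, s.2.2 i ^ (max (-(s.1 i ℓ)) 0).toNat))
   else s.2.2 j⟩

/-- The `F`-polynomial `F^{B;t_0}_{j;t}` (as an element of the field of rational functions)
at the end of the path `p`. -/
def Fpoly (B : Matrix ι ι ℤ) (p : List ι) : ι → FField ι :=
  (p.foldl fpolyStep ⟨B, 1, fun _ => 1⟩).2.2

/-- The polynomial representing an element of the fraction field (when it is a polynomial). -/
def polyOf (x : FField ι) : MvPolynomial ι ℤ := by
  classical exact
    if h : ∃ q : MvPolynomial ι ℤ, algebraMap (MvPolynomial ι ℤ) (FField ι) q = x then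
      h.choose else 0

/-- The `H`-matrix `H^{B;t_0}_t`: `h_{ij;t}` is the minimum over exponent vectors `a` in the
support of `F^{B;t_0}_{j;t}` of `-a_i + ∑_{l ≠ i} [-b_{il}]₊ a_l`. -/
def Hmat (B : Matrix ι ι ℤ) (p : List ι) : Matrix ι ι ℤ := fun i j =>
  if h : (polyOf (Fpoly B p j)).support.Nonempty then
    (polyOf (Fpoly B p j)).support.inf' h
      (fun a => -(a i : ℤ) + ∑ l ∈ Finset.univ.erase i, max (-(B i l)) 0 * (a l : ℤ))
  else 0

end FPolys

/-- The embedding `ℚ(y_1,…,y_n) → ℚ(y_1,…,y_{2n})` sending `y_i` to `y_i`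
(the second batch of variables indexed by the right summand). -/
noncomputable def embK (n : ℕ) : FField (Fin n) →+* FField (Fin n ⊕ Fin n) :=
  IsFractionRing.lift
    (g := (algebraMap (MvPolynomial (Fin n ⊕ Fin n) ℤ) (FField (Fin n ⊕ Fin n))).comp
      (MvPolynomial.rename (Sum.inl : Fin n → Fin n ⊕ Fin n)).toRingHom)
    (by
      intro a b hab
      simp only [RingHom.coe_comp, Function.comp_apply, AlgHom.toRingHom_eq_coe,
        RingHom.coe_coe] at hab
      exact MvPolynomial.rename_injective _ Sum.inl_injective
        (IsFractionRing.injective (MvPolynomial (Fin n ⊕ Fin n) ℤ)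
          (FField (Fin n ⊕ Fin n)) hab))

/-- `D⁻¹ Cᵀ D` over `ℚ`, for the positive diagonal skew-symmetrizer `D = diagonal d`. -/
noncomputable def dCd {n : ℕ} (d : Fin n → ℤ) (C : Matrix (Fin n) (Fin n) ℤ) :
    Matrix (Fin n) (Fin n) ℚ :=
  (Matrix.diagonal fun i => (d i : ℚ))⁻¹ * (C.map (Int.cast : ℤ → ℚ))ᵀ *
    Matrix.diagonal fun i => (d i : ℚ)

end Defs

/-!
Write `X` and `Y` for the two arguments of the entrywise maximum in the recursion for `F`.
Since `[a]₊ - [-a]₊ = a`, their difference is the `ℓ`-th column of `C_t + F_t B_t`, so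
`max X Y = Y + [X - Y]₊ = X + [Y - X]₊` gives the formula for `ε = 1` and `ε = -1` with
`C_t + F_t B_t` in place of `C^{-B;t_0}_t`. That these agree follows by induction along the path:
`B^{-B}_t = -B_t`, and because `B_t` has zero diagonal (it stays skew-symmetrizable) the
mutation factors as `μ_ℓ(B) = (J_ℓ + [-B]^{•ℓ}₊) B (J_ℓ + [B]^{ℓ•}₊)`, where the left factor is
an involution; the inductive step is then a short computation in the matrix ring.
-/

section Selection

variable {ι : Type} [DecidableEq ι] {R : Type} [CommRing R] (k : ι)

lemma colSel_add (A B : Matrix ι ι R) : colSel k (A + B) = colSel k A + colSel k B := by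
  ext i j
  by_cases h : j = k <;> simp [colSel, h]

lemma colSel_sub (A B : Matrix ι ι R) : colSel k (A - B) = colSel k A - colSel k B := by
  ext i j
  by_cases h : j = k <;> simp [colSel, h]

lemma colSel_neg (A : Matrix ι ι R) : colSel k (-A) = -colSel k A := by
  ext i j
  by_cases h : j = k <;> simp [colSel, h]

lemma rowSel_add (A B : Matrix ι ι R) : rowSel k (A + B) = rowSel k A + rowSel k B := by
  ext i j
  by_cases h : i = k <;> simp [rowSel, h]

lemma matPos_colSel [LinearOrder R] (A : Matrix ι ι R) :
    matPos (colSel k A) = colSel k (matPos A) := by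
  ext i j
  by_cases h : j = k <;> simp [matPos, colSel, h]

variable [Fintype ι]

lemma mul_colSel (A M : Matrix ι ι R) : A * colSel k M = colSel k (A * M) := by
  ext i j
  by_cases h : j = k <;> simp [colSel, Matrix.mul_apply, h]

lemma mul_rowSel (A M : Matrix ι ι R) : A * rowSel k M = colSel k A * M := by
  ext i j
  simp [rowSel, colSel, Matrix.mul_apply]

lemma colSel_mul_apply (M A : Matrix ι ι R) (i j : ι) : (colSel k M * A) i j = M i k * A k j := by
  simp [colSel, Matrix.mul_apply]

lemma Jmat_add_colSel_mul_apply (M A : Matrix ι ι R) (i j : ι) :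
    ((Jmat k + colSel k M : Matrix ι ι R) * A) i j
      = (if i = k then -A i j else A i j) + M i k * A k j := by
  rw [Matrix.add_mul, Matrix.add_apply, Jmat, Matrix.diagonal_mul, colSel_mul_apply]
  split_ifs <;> ring

lemma mul_Jmat_add_rowSel_apply (A M : Matrix ι ι R) (i j : ι) :
    (A * (Jmat k + rowSel k M : Matrix ι ι R)) i j
      = (if j = k then -A i j else A i j) + A i k * M k j := by
  rw [Matrix.mul_add, Matrix.add_apply, Jmat, Matrix.mul_diagonal, mul_rowSel, colSel_mul_apply]
  split_ifs <;> ring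

variable {k}

lemma Jmat_add_colSel_mul_self {M : Matrix ι ι R} (hM : M k k = 0) :
    (Jmat k + colSel k M : Matrix ι ι R) * (Jmat k + colSel k M) = 1 := by
  ext i j
  rw [Jmat_add_colSel_mul_apply]
  obtain rfl | hj := eq_or_ne j k
  · by_cases hi : i = j <;> simp [Jmat, colSel, Matrix.one_apply, hi, hM]
  · by_cases hi : i = k <;>
      simp [Jmat, colSel, Matrix.one_apply, Matrix.diagonal_apply, hi, hj, hj.symm]

lemma colSel_mul_Jmat_add_colSel {M : Matrix ι ι R} (hM : M k k = 0) (A : Matrix ι ι R) :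
    colSel k A * (Jmat k + colSel k M) = -colSel k A := by
  ext i j
  rw [colSel_mul_apply]
  obtain rfl | hj := eq_or_ne j k
  · simp [Jmat, colSel, hM]
  · simp [Jmat, colSel, hj, hj.symm]

lemma colSel_mul_mul_Jmat_add_rowSel {B : Matrix ι ι R} (hB : B k k = 0) (A M : Matrix ι ι R) :
    colSel k A * B * (Jmat k + rowSel k M) = colSel k A * B := by
  ext i j
  simp only [mul_Jmat_add_rowSel_apply, colSel_mul_apply, hB]
  by_cases hj : j = k <;> simp [hj, hB]

end Selection

lemma emax_comm {ι R : Type} [LinearOrder R] (A B : Matrix ι ι R) : emax A B = emax B A := by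
  ext i j
  exact max_comm _ _

section PosPart

variable {ι R : Type} [CommRing R] [LinearOrder R] [IsOrderedRing R]

lemma matPos_sub_matPos_neg (A : Matrix ι ι R) : matPos A - matPos (-A) = A := by
  ext i j
  exact max_zero_sub_max_neg_zero_eq_self (A i j)

lemma matPos_eq_matPos_neg_add (A : Matrix ι ι R) : matPos A = matPos (-A) + A :=
  sub_eq_iff_eq_add'.mp (matPos_sub_matPos_neg A)

lemma emax_eq_add_matPos_sub (A B : Matrix ι ι R) : emax A B = B + matPos (A - B) := by
  ext i j
  rw [emax, Matrix.add_apply, matPos, Matrix.sub_apply, ← sub_self (B i j), max_sub_sub_right]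
  abel

end PosPart

section Mutation

variable {ι : Type} [DecidableEq ι] {R : Type} [CommRing R] [LinearOrder R] [IsOrderedRing R]

lemma mutate_neg (B : Matrix ι ι R) (k : ι) : mutate (-B) k = -mutate B k := by
  ext i j
  by_cases h : i = k ∨ j = k
  · simp [mutate, h]
  · simp only [mutate, if_neg h, Matrix.neg_apply, neg_neg]
    linear_combination B k j * max_zero_sub_max_neg_zero_eq_self (B i k)
      - B i k * max_zero_sub_max_neg_zero_eq_self (B k j)

variable [Fintype ι] {k : ι}

lemma mutate_eq_mul {B : Matrix ι ι R} (hB : B k k = 0) :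
    mutate B k = (Jmat k + colSel k (matPos (-B))) * B * (Jmat k + rowSel k (matPos B)) := by
  ext i j
  rw [mul_Jmat_add_rowSel_apply, Jmat_add_colSel_mul_apply, Jmat_add_colSel_mul_apply]
  by_cases hi : i = k <;> by_cases hj : j = k
  · simp [mutate, matPos, hi, hj, hB]
  · simp [mutate, matPos, hi, hj, hB]
  · simp [mutate, matPos, hi, hj, hB]
  · simp only [mutate, matPos, hi, hj, hB, or_self, if_false, Matrix.neg_apply]
    linear_combination B k j * max_zero_sub_max_neg_zero_eq_self (B i k)
      - B i k * max_zero_sub_max_neg_zero_eq_self (B k j)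

end Mutation

section SeedStep

variable {ι : Type} [Fintype ι] [DecidableEq ι] {R : Type} [CommRing R] [LinearOrder R]
  [IsOrderedRing R]

lemma seedStep_F (B₀ : Matrix ι ι R) (s : SeedData ι R) (ℓ : ι) {ε : R} (hε : ε = 1 ∨ ε = -1) :
    (seedStep B₀ s ℓ).F =
      s.F * (Jmat ℓ + colSel ℓ (matPos ((-ε) • s.B))) + colSel ℓ (matPos ((-ε) • s.C))
        + colSel ℓ (matPos (ε • (s.C + s.F * s.B))) := by
  have hdiff : colSel ℓ (matPos s.C) + s.F * colSel ℓ (matPos s.B)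
      - (colSel ℓ (matPos (-s.C)) + s.F * colSel ℓ (matPos (-s.B)))
      = colSel ℓ (s.C + s.F * s.B) := by
    rw [add_sub_add_comm, ← colSel_sub, ← mul_sub, ← colSel_sub, matPos_sub_matPos_neg,
      matPos_sub_matPos_neg, mul_colSel, colSel_add]
  simp only [seedStep]
  rcases hε with rfl | rfl
  · rw [emax_eq_add_matPos_sub, hdiff, matPos_colSel]
    simp only [neg_smul, one_smul, mul_add, mul_colSel]
    abel
  · rw [emax_comm, emax_eq_add_matPos_sub, ← neg_sub, hdiff, ← colSel_neg, matPos_colSel]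
    simp only [neg_smul, one_smul, neg_neg, mul_add, mul_colSel]
    abel

lemma seedStep_C_eq_add_F_mul_B (B₀ B₀' : Matrix ι ι R) {s s' : SeedData ι R} {ℓ : ι}
    (hℓ : s.B ℓ ℓ = 0) (hB : s'.B = -s.B) (hC : s'.C = s.C + s.F * s.B) :
    (seedStep B₀' s' ℓ).C = (seedStep B₀ s ℓ).C + (seedStep B₀ s ℓ).F * (seedStep B₀ s ℓ).B := by
  have hE : matPos (-s.B) ℓ ℓ = 0 := by simp [matPos, hℓ]
  rw [seedStep_F B₀ s ℓ (Or.inl rfl)]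
  simp only [seedStep, hB, hC, neg_smul, one_smul, mutate_eq_mul hℓ]
  set D := s.C + s.F * s.B
  set E : Matrix ι ι R := Jmat ℓ + colSel ℓ (matPos (-s.B))
  set Rp : Matrix ι ι R := Jmat ℓ + rowSel ℓ (matPos s.B)
  have hFB : (s.F * E + colSel ℓ (matPos (-s.C)) + colSel ℓ (matPos D)) * (E * s.B * Rp)
      = s.F * s.B * Rp - colSel ℓ (matPos (-s.C) + matPos D) * s.B := by
    calc _ = s.F * (E * E) * s.B * Rp + colSel ℓ (matPos (-s.C) + matPos D) * E * s.B * Rp := by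
          simp only [colSel_add, add_mul, Matrix.mul_assoc, add_assoc]
      _ = _ := by
          rw [Jmat_add_colSel_mul_self hE, colSel_mul_Jmat_add_colSel hE, Matrix.mul_one,
            Matrix.neg_mul, Matrix.neg_mul, colSel_mul_mul_Jmat_add_rowSel hℓ, sub_eq_add_neg]
  have hRp : rowSel ℓ (matPos s.B) = rowSel ℓ (matPos (-s.B)) + rowSel ℓ s.B := by
    rw [← rowSel_add, ← matPos_eq_matPos_neg_add]
  have hPD : matPos (-D) = matPos D - D := eq_sub_of_add_eq (matPos_eq_matPos_neg_add D).symm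
  rw [hFB, hPD]
  simp only [Rp, D, hRp, mul_add, add_mul, sub_mul, mul_neg, mul_rowSel, colSel_add, colSel_sub]
  abel

end SeedStep

section Paths

variable {ι : Type} [Fintype ι] [DecidableEq ι] {R : Type} [CommRing R] [LinearOrder R]

lemma seedOf_append (B : Matrix ι ι R) (p : List ι) (ℓ : ι) :
    seedOf B (p ++ [ℓ]) = seedStep B (seedOf B p) ℓ := by
  simp [seedOf, List.foldl_append]

variable [IsOrderedRing R]

lemma Bpath_neg (B : Matrix ι ι R) (p : List ι) : Bpath (-B) p = -Bpath B p := by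
  induction p using List.reverseRecOn with
  | nil => rfl
  | append_singleton p ℓ ih =>
    simp only [Bpath, seedOf_append] at ih ⊢
    exact (congrArg (mutate · ℓ) ih).trans (mutate_neg _ ℓ)

lemma Cmat_neg {B : Matrix ι ι R} (hB : ∀ (q : List ι) (k : ι), Bpath B q k k = 0)
    (p : List ι) : Cmat (-B) p = Cmat B p + Fmat B p * Bpath B p := by
  induction p using List.reverseRecOn with
  | nil => simp [Cmat, Fmat, seedOf]
  | append_singleton p ℓ ih =>
    simp only [Cmat, Fmat, Bpath, seedOf_append]
    exact seedStep_C_eq_add_F_mul_B B (-B) (hB p ℓ) (Bpath_neg B p) ih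

end Paths

section SkewSymmetrizable

variable {ι : Type} [Fintype ι] [DecidableEq ι]

lemma isSkewSymmetrizable_iff {B : Matrix ι ι ℤ} :
    IsSkewSymmetrizable B ↔ ∃ d : ι → ℤ, (∀ i, 0 < d i) ∧ ∀ i j, d i * B i j = -(d j * B j i) := by
  refine exists_congr fun d => and_congr_right fun _ => ?_
  rw [← Matrix.ext_iff, forall_comm]
  simp only [Matrix.transpose_apply, Matrix.neg_apply, Matrix.diagonal_mul]

lemma IsSkewSymmetrizable.apply_self {B : Matrix ι ι ℤ} (hB : IsSkewSymmetrizable B) (i : ι) :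
    B i i = 0 := by
  obtain ⟨d, hd, hskew⟩ := isSkewSymmetrizable_iff.mp hB
  have h := hskew i i
  have : d i * B i i = 0 := by linarith
  exact (mul_eq_zero.mp this).resolve_left (hd i).ne'

lemma IsSkewSymmetrizable.mutate {B : Matrix ι ι ℤ} (hB : IsSkewSymmetrizable B) (k : ι) :
    IsSkewSymmetrizable (mutate B k) := by
  obtain ⟨d, hd, h⟩ := isSkewSymmetrizable_iff.mp hB
  refine isSkewSymmetrizable_iff.mpr ⟨d, hd, fun i j => ?_⟩
  by_cases hij : i = k ∨ j = k
  · have hji : j = k ∨ i = k := hij.symm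
    simp only [_root_.mutate, if_pos hij, if_pos hji, mul_neg, neg_neg]
    linarith [h i j]
  · have hji : ¬(j = k ∨ i = k) := by tauto
    simp only [_root_.mutate, if_neg hij, if_neg hji]
    -- the cross terms match after multiplying by `d k`, which lets `d` pass through both factors
    have hk := (hd k).ne'
    have E1 : d i * max (B i k) 0 = d k * max (-(B k i)) 0 := by
      rw [mul_max_of_nonneg _ _ (hd i).le, mul_max_of_nonneg _ _ (hd k).le, mul_zero, mul_zero,
        mul_neg, ← h i k]
    have E2 : d k * max (-(B k j)) 0 = d j * max (B j k) 0 := by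
      rw [mul_max_of_nonneg _ _ (hd k).le, mul_max_of_nonneg _ _ (hd j).le, mul_zero, mul_zero,
        mul_neg, h k j, neg_neg]
    have T2 : d i * (max (B i k) 0 * B k j) = -(d j * (B j k * max (-(B k i)) 0)) := by
      refine mul_left_cancel₀ hk ?_
      linear_combination (d k * B k j) * E1 + (d k * max (-(B k i)) 0) * h k j
    have T3 : d i * (B i k * max (-(B k j)) 0) = -(d j * (max (B j k) 0 * B k i)) := by
      refine mul_left_cancel₀ hk ?_
      linear_combination (d i * B i k) * E2 + (d j * max (B j k) 0) * h i k
    linear_combination h i j + T2 + T3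

lemma IsSkewSymmetrizable.Bpath {B : Matrix ι ι ℤ} (hB : IsSkewSymmetrizable B) (p : List ι) :
    IsSkewSymmetrizable (Bpath B p) := by
  induction p using List.reverseRecOn with
  | nil => exact hB
  | append_singleton p ℓ ih =>
    rw [_root_.Bpath, seedOf_append]
    exact ih.mutate ℓ

end SkewSymmetrizable

/-- the final-seed mutation of the `F`-matrix in direction `ℓ`, for `ε ∈ {±1}`:
`F^{B;t_0}_{t'} = F^{B;t_0}_t (J_ℓ + [-εB_t]^{•ℓ}₊) + [-εC^{B;t_0}_t]^{•ℓ}₊ + [εC^{-B;t_0}_t]^{•ℓ}₊`. -/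
theorem Fmat_finalSeedMutation {n : ℕ} (B : Matrix (Fin n) (Fin n) ℤ)
    (hB : IsSkewSymmetrizable B) (p : List (Fin n)) (ℓ : Fin n)
    (ε : ℤ) (hε : ε = 1 ∨ ε = -1) :
    Fmat B (p ++ [ℓ]) =
      Fmat B p * (Jmat ℓ + colSel ℓ (matPos ((-ε) • Bpath B p)))
        + colSel ℓ (matPos ((-ε) • Cmat B p)) + colSel ℓ (matPos (ε • Cmat (-B) p)) := by
  rw [Cmat_neg (fun q k => (hB.Bpath q).apply_self k), Fmat, seedOf_append,
    seedStep_F B _ ℓ hε]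
  rfl
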